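/- Correctness of the Pareto Bellman–Ford algorithm (main theorem): for every iteration ℓ : ℕ and every vertex t : V, the Pareto table D ℓ t equals exactly the set of minimal elements, with respect to the product order on Fin k → ℝ≥0, of the set {cost(Q) : Q is a walk from s to t with at most ℓ edges}. In particular, for the hop bound η and any recourse point t with h t = true (for a classifier h : V → Bool), D η t consists precisely of the Pareto optimal multi-costs of walks from s to t with at most η edges. -/

import Mathlib

open scoped NNReal

/-- A walk from `s` to `t`: a nonempty list of vertices starting at `s`,
ending at `t`, with `E u v` for every pair of consecutive vertices. -/
def IsWalk {V : Type*} (E : V → V → Prop) (s t : V) (l : List V) : Prop :=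
  l ≠ [] ∧ l.head? = some s ∧ l.getLast? = some t ∧ l.Chain' E

/-- The multi-cost of a walk: componentwise sum of edge weights over
consecutive pairs of vertices (a walk with no edges has cost `0`). -/
def walkCost {V : Type*} {k : ℕ} (w : V → V → Fin k → ℝ≥0) (l : List V) :
    Fin k → ℝ≥0 :=
  ((l.zip l.tail).map fun p => w p.1 p.2).sum

/-- The Pareto front: minimal elements of `S` w.r.t. the product order. -/
def paretoFront {k : ℕ} (S : Set (Fin k → ℝ≥0)) : Set (Fin k → ℝ≥0) :=
  {m | m ∈ S ∧ ¬ ∃ c ∈ S, c < m}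

/-!
Write `W ℓ t` for the set of costs of walks from `s` to `t` with at most `ℓ` edges. Splitting off
the last edge of a walk shows that `W` obeys the recursion of `D` without the Pareto filter:
`W (ℓ + 1) t = W ℓ t ∪ {c + w u t | E u t, c ∈ W ℓ u}`. Filtering the sets `W ℓ u` to their Pareto
fronts first does not change the front of this union: each `W ℓ u` is finite, so every cost in it
dominates a minimal one, and `c ↦ c + w u t` is monotone. Induction on `ℓ` gives `D ℓ t`
equal to the Pareto front of `W ℓ t`.
-/

section ParetoFront

variable {k : ℕ}

lemma mem_paretoFront_iff_minimal {S : Set (Fin k → ℝ≥0)} {m : Fin k → ℝ≥0} :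
    m ∈ paretoFront S ↔ Minimal (· ∈ S) m := by
  simp [paretoFront, minimal_iff_forall_lt, imp_not_comm]

lemma paretoFront_subset (S : Set (Fin k → ℝ≥0)) : paretoFront S ⊆ S :=
  fun _ hm => hm.1

@[simp]
lemma paretoFront_empty : paretoFront (∅ : Set (Fin k → ℝ≥0)) = ∅ :=
  Set.subset_empty_iff.mp (paretoFront_subset ∅)

@[simp]
lemma paretoFront_singleton (x : Fin k → ℝ≥0) : paretoFront {x} = {x} := by
  ext m
  simp [mem_paretoFront_iff_minimal]

lemma Set.Finite.exists_mem_paretoFront_le {S : Set (Fin k → ℝ≥0)} (hS : S.Finite)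
    {x : Fin k → ℝ≥0} (hx : x ∈ S) : ∃ m ∈ paretoFront S, m ≤ x := by
  obtain ⟨m, hmx, hm⟩ := hS.isPWO.exists_le_minimal hx
  exact ⟨m, mem_paretoFront_iff_minimal.mpr hm, hmx⟩

lemma paretoFront_eq_of_subset_of_dominated {T S : Set (Fin k → ℝ≥0)} (hTS : T ⊆ S)
    (hdom : ∀ x ∈ S, ∃ y ∈ T, y ≤ x) : paretoFront T = paretoFront S := by
  ext m
  constructor
  · rintro ⟨hmT, hmin⟩
    refine ⟨hTS hmT, fun ⟨c, hcS, hcm⟩ => ?_⟩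
    obtain ⟨y, hyT, hyc⟩ := hdom c hcS
    exact hmin ⟨y, hyT, hyc.trans_lt hcm⟩
  · rintro ⟨hmS, hmin⟩
    obtain ⟨y, hyT, hym⟩ := hdom m hmS
    obtain rfl : y = m := by_contra fun hne => hmin ⟨y, hTS hyT, hym.lt_of_ne hne⟩
    exact ⟨hyT, fun ⟨c, hcT, hcy⟩ => hmin ⟨c, hTS hcT, hcy⟩⟩

end ParetoFront

section Relax

variable {V : Type*} {k : ℕ} (E : V → V → Prop) (w : V → V → Fin k → ℝ≥0)

def relax (X : V → Set (Fin k → ℝ≥0)) (v : V) : Set (Fin k → ℝ≥0) :=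
  X v ∪ {x | ∃ u : V, E u v ∧ ∃ c ∈ X u, x = c + w u v}

variable {E w}

lemma relax_mono {X Y : V → Set (Fin k → ℝ≥0)} (hXY : ∀ u, X u ⊆ Y u) (v : V) :
    relax E w X v ⊆ relax E w Y v := by
  rintro x (hx | ⟨u, he, c, hc, rfl⟩)
  · exact Or.inl (hXY v hx)
  · exact Or.inr ⟨u, he, c, hXY u hc, rfl⟩

lemma paretoFront_relax_paretoFront {X : V → Set (Fin k → ℝ≥0)} (hX : ∀ u, (X u).Finite)
    (v : V) : paretoFront (relax E w (fun u => paretoFront (X u)) v) =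
      paretoFront (relax E w X v) := by
  refine paretoFront_eq_of_subset_of_dominated (relax_mono (fun u => paretoFront_subset _) v) ?_
  rintro x (hx | ⟨u, he, c, hc, rfl⟩)
  · obtain ⟨m, hm, hmx⟩ := (hX v).exists_mem_paretoFront_le hx
    exact ⟨m, Or.inl hm, hmx⟩
  · obtain ⟨m, hm, hmc⟩ := (hX u).exists_mem_paretoFront_le hc
    exact ⟨m + w u v, Or.inr ⟨u, he, m, hm, rfl⟩, add_le_add_left hmc _⟩

end Relax

section Walk

variable {V : Type*} {k : ℕ} {E : V → V → Prop} {s t u : V} {l : List V}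

lemma IsWalk.getLast?_eq (hl : IsWalk E s t l) : l.getLast? = some t :=
  hl.2.2.1

lemma isWalk_singleton_iff {v : V} : IsWalk E s t [v] ↔ v = s ∧ v = t := by
  refine ⟨fun ⟨_, hs, ht, _⟩ => ⟨by simpa using hs, by simpa using ht⟩, ?_⟩
  rintro ⟨rfl, rfl⟩
  exact ⟨List.cons_ne_nil _ _, rfl, rfl, List.isChain_singleton _⟩

lemma IsWalk.concat (hl : IsWalk E s u l) (he : E u t) : IsWalk E s t (l ++ [t]) := by
  obtain ⟨hne, hhead, hlast, hchain⟩ := hl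
  refine ⟨by simp, by simp [List.head?_append, hhead], by simp, ?_⟩
  exact hchain.append (List.isChain_singleton t) (by simp [hlast, he])

lemma IsWalk.exists_eq_concat (hl : IsWalk E s t l) (hlen : 2 ≤ l.length) :
    ∃ u l', IsWalk E s u l' ∧ E u t ∧ l = l' ++ [t] := by
  obtain ⟨hne, hhead, hlast, hchain⟩ := hl
  obtain ⟨l', v, rfl⟩ := List.eq_nil_or_concat' l |>.resolve_left hne
  obtain rfl : t = v := by simpa using hlast.symm
  have hne' : l' ≠ [] := by rintro rfl; simp at hlen
  obtain ⟨hchain', -, hrel⟩ := List.isChain_append.mp hchain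
  refine ⟨l'.getLast hne', l', ⟨hne', ?_, List.getLast?_eq_some_getLast hne', hchain'⟩, ?_, rfl⟩
  · rwa [List.head?_append_of_ne_nil _ hne'] at hhead
  · exact hrel _ (List.getLast?_eq_some_getLast hne') t (by simp)

lemma walkCost_cons_cons (w : V → V → Fin k → ℝ≥0) (x y : V) (l : List V) :
    walkCost w (x :: y :: l) = w x y + walkCost w (y :: l) := by
  simp [walkCost]

lemma walkCost_concat (w : V → V → Fin k → ℝ≥0) :
    ∀ {l : List V}, l.getLast? = some u → walkCost w (l ++ [t]) = walkCost w l + w u t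
  | [], h => by simp at h
  | [a], h => by
    obtain rfl : a = u := by simpa using h
    simp [walkCost]
  | a :: b :: l, h => by
    rw [List.cons_append, List.cons_append, walkCost_cons_cons, ← List.cons_append,
      walkCost_concat w (l := b :: l) (by simpa using h), walkCost_cons_cons, add_assoc]

end Walk

section WalkCosts

variable {V : Type*} {k : ℕ} (E : V → V → Prop) (w : V → V → Fin k → ℝ≥0) (s : V)

def walkCosts (ℓ : ℕ) (t : V) : Set (Fin k → ℝ≥0) :=
  {c | ∃ Q : List V, IsWalk E s t Q ∧ Q.length - 1 ≤ ℓ ∧ walkCost w Q = c}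

lemma walkCosts_finite [Finite V] (ℓ : ℕ) (t : V) : (walkCosts E w s ℓ t).Finite := by
  refine (List.finite_length_le V (ℓ + 1)).image (walkCost w) |>.subset ?_
  rintro c ⟨Q, -, hlen, rfl⟩
  exact ⟨Q, Nat.sub_le_iff_le_add.mp hlen, rfl⟩

lemma walkCosts_zero (t : V) : walkCosts E w s 0 t = {c | t = s ∧ c = 0} := by
  ext c
  constructor
  · rintro ⟨Q, hQ, hlen, rfl⟩
    have hpos := List.length_pos_iff.mpr hQ.1
    obtain ⟨v, rfl⟩ : ∃ v, Q = [v] := List.length_eq_one_iff.mp (by omega)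
    obtain ⟨rfl, rfl⟩ := isWalk_singleton_iff.mp hQ
    simp [walkCost]
  · rintro ⟨rfl, rfl⟩
    exact ⟨[t], isWalk_singleton_iff.mpr ⟨rfl, rfl⟩, by simp, by simp [walkCost]⟩

lemma walkCosts_succ (ℓ : ℕ) : walkCosts E w s (ℓ + 1) = relax E w (walkCosts E w s ℓ) := by
  ext t c
  constructor
  · rintro ⟨Q, hQ, hlen, rfl⟩
    by_cases hle : Q.length - 1 ≤ ℓ
    · exact Or.inl ⟨Q, hQ, hle, rfl⟩
    obtain ⟨u, l, hl, he, rfl⟩ := hQ.exists_eq_concat (by omega)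
    refine Or.inr ⟨u, he, walkCost w l, ⟨l, hl, ?_, rfl⟩, walkCost_concat w hl.getLast?_eq⟩
    simp only [List.length_append, List.length_singleton] at hlen
    omega
  · rintro (⟨Q, hQ, hle, rfl⟩ | ⟨u, he, -, ⟨Q, hQ, hle, rfl⟩, rfl⟩)
    · exact ⟨Q, hQ, by omega, rfl⟩
    · refine ⟨Q ++ [t], hQ.concat he, ?_, walkCost_concat w hQ.getLast?_eq⟩
      simp only [List.length_append, List.length_singleton]
      omega

end WalkCosts

theorem paretoBellmanFord_correct_general {V : Type*} [Fintype V]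
    (E : V → V → Prop) {k : ℕ} (w : V → V → Fin k → ℝ≥0)
    (s : V) (D : ℕ → V → Set (Fin k → ℝ≥0))
    (hD0s : D 0 s = {0})
    (hD0 : ∀ v : V, v ≠ s → D 0 v = ∅)
    (hDstep : ∀ (ℓ : ℕ) (v : V), D (ℓ + 1) v =
      paretoFront (D ℓ v ∪ {x | ∃ u : V, E u v ∧ ∃ c ∈ D ℓ u, x = c + w u v})) :
    (∀ (ℓ : ℕ) (t : V), D ℓ t =
      paretoFront {c | ∃ Q : List V,
        IsWalk E s t Q ∧ Q.length - 1 ≤ ℓ ∧ walkCost w Q = c}) ∧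
    (∀ (h : V → Bool) (η : ℕ) (t : V), h t = true → D η t =
      paretoFront {c | ∃ Q : List V,
        IsWalk E s t Q ∧ Q.length - 1 ≤ η ∧ walkCost w Q = c}) := by
  have hD : ∀ ℓ, D ℓ = fun t => paretoFront (walkCosts E w s ℓ t) := by
    intro ℓ
    induction ℓ with
    | zero =>
      funext t
      rcases eq_or_ne t s with rfl | hts
      · simp [hD0s, walkCosts_zero]
      · simp [hD0 t hts, walkCosts_zero, hts]
    | succ ℓ ih =>
      funext t
      rw [hDstep, ih, walkCosts_succ, ← paretoFront_relax_paretoFront (walkCosts_finite E w s ℓ)]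
      rfl
  exact ⟨fun ℓ t => congrFun (hD ℓ) t, fun _ η t _ => congrFun (hD η) t⟩

/-- correctness of the Pareto Bellman–Ford algorithm:
`D ℓ t` equals exactly the set of minimal elements of the set of costs of
walks from `s` to `t` with at most `ℓ` edges; in particular, for the hop
bound `η` and any recourse point `t` with `h t = true`, `D η t` consists
precisely of the Pareto optimal multi-costs of walks from `s` to `t` with at
most `η` edges. -/
theorem paretoBellmanFord_correct {V : Type*} [Fintype V]
    (E : V → V → Prop) [DecidableRel E] {k : ℕ} (w : V → V → Fin k → ℝ≥0)
    (s : V) (D : ℕ → V → Set (Fin k → ℝ≥0))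
    (hD0s : D 0 s = {0})
    (hD0 : ∀ v : V, v ≠ s → D 0 v = ∅)
    (hDstep : ∀ (ℓ : ℕ) (v : V), D (ℓ + 1) v =
      paretoFront (D ℓ v ∪ {x | ∃ u : V, E u v ∧ ∃ c ∈ D ℓ u, x = c + w u v})) :
    (∀ (ℓ : ℕ) (t : V), D ℓ t =
      paretoFront {c | ∃ Q : List V,
        IsWalk E s t Q ∧ Q.length - 1 ≤ ℓ ∧ walkCost w Q = c}) ∧
    (∀ (h : V → Bool) (η : ℕ) (t : V), h t = true → D η t =
      paretoFront {c | ∃ Q : List V,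
        IsWalk E s t Q ∧ Q.length - 1 ≤ η ∧ walkCost w Q = c}) :=
  paretoBellmanFord_correct_general E w s D hD0s hD0 hDstep
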